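/- The assignment s1 ↦ g1, s2 ↦ g2, s3 ↦ g2·g3·g2⁻¹ extends to a group homomorphism from the Artin braid group Br4 to the quiver braid group G, and this homomorphism is surjective. -/
import Mathlib


/-- The relators of the quiver braid group `G` on generators `g1, g2, g3`:
`g1g2g1 = g2g1g2`, `g1g3g1 = g3g1g3`, `g2g3g2 = g3g2g3`, and
`g1g2g3g1 = g2g3g1g2`. -/
def quiverRels : Set (FreeGroup (Fin 3)) :=
  { FreeGroup.of 0 * FreeGroup.of 1 * FreeGroup.of 0 *
      (FreeGroup.of 1 * FreeGroup.of 0 * FreeGroup.of 1)⁻¹,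
    FreeGroup.of 0 * FreeGroup.of 2 * FreeGroup.of 0 *
      (FreeGroup.of 2 * FreeGroup.of 0 * FreeGroup.of 2)⁻¹,
    FreeGroup.of 1 * FreeGroup.of 2 * FreeGroup.of 1 *
      (FreeGroup.of 2 * FreeGroup.of 1 * FreeGroup.of 2)⁻¹,
    FreeGroup.of 0 * FreeGroup.of 1 * FreeGroup.of 2 * FreeGroup.of 0 *
      (FreeGroup.of 1 * FreeGroup.of 2 * FreeGroup.of 0 * FreeGroup.of 1)⁻¹ }

/-- The quiver braid group `G`. -/
abbrev QuiverBraidGroup := PresentedGroup quiverRels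

/-- The generators `g1, g2, g3` of `G` (indexed by `0, 1, 2`). -/
def g (i : Fin 3) : QuiverBraidGroup := PresentedGroup.of i

/-- The relators of the Artin braid group `Br₄` on generators `s1, s2, s3`:
`s1s2s1 = s2s1s2`, `s2s3s2 = s3s2s3`, and `s1s3 = s3s1`. -/
def braidRels4 : Set (FreeGroup (Fin 3)) :=
  { FreeGroup.of 0 * FreeGroup.of 1 * FreeGroup.of 0 *
      (FreeGroup.of 1 * FreeGroup.of 0 * FreeGroup.of 1)⁻¹,
    FreeGroup.of 1 * FreeGroup.of 2 * FreeGroup.of 1 *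
      (FreeGroup.of 2 * FreeGroup.of 1 * FreeGroup.of 2)⁻¹,
    FreeGroup.of 0 * FreeGroup.of 2 * (FreeGroup.of 2 * FreeGroup.of 0)⁻¹ }

/-- The Artin braid group `Br₄`. -/
abbrev BraidGroup4 := PresentedGroup braidRels4

/-- The generators `s1, s2, s3` of `Br₄` (indexed by `0, 1, 2`). -/
def s (i : Fin 3) : BraidGroup4 := PresentedGroup.of i

lemma quiver_rel {r : FreeGroup (Fin 3)} (h : r ∈ quiverRels) :
    PresentedGroup.mk quiverRels r = 1 := by
  exact (QuotientGroup.eq_one_iff _).2 (Subgroup.subset_normalClosure h)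

lemma rel01 : g 0 * g 1 * g 0 = g 1 * g 0 * g 1 := by
  have := quiver_rel (r := FreeGroup.of 0 * FreeGroup.of 1 * FreeGroup.of 0 *
      (FreeGroup.of 1 * FreeGroup.of 0 * FreeGroup.of 1)⁻¹) (by left; rfl)
  simp only [map_mul, map_inv, mul_inv_eq_one] at this
  exact this

lemma rel02 : g 0 * g 2 * g 0 = g 2 * g 0 * g 2 := by
  have := quiver_rel (r := FreeGroup.of 0 * FreeGroup.of 2 * FreeGroup.of 0 *
      (FreeGroup.of 2 * FreeGroup.of 0 * FreeGroup.of 2)⁻¹) (by right; left; rfl)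
  simp only [map_mul, map_inv, mul_inv_eq_one] at this
  exact this

lemma rel12 : g 1 * g 2 * g 1 = g 2 * g 1 * g 2 := by
  have := quiver_rel (r := FreeGroup.of 1 * FreeGroup.of 2 * FreeGroup.of 1 *
      (FreeGroup.of 2 * FreeGroup.of 1 * FreeGroup.of 2)⁻¹) (by right; right; left; rfl)
  simp only [map_mul, map_inv, mul_inv_eq_one] at this
  exact this

lemma rel012 : g 0 * g 1 * g 2 * g 0 = g 1 * g 2 * g 0 * g 1 := by
  have := quiver_rel (r := FreeGroup.of 0 * FreeGroup.of 1 * FreeGroup.of 2 * FreeGroup.of 0 *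
      (FreeGroup.of 1 * FreeGroup.of 2 * FreeGroup.of 0 * FreeGroup.of 1)⁻¹)
      (by right; right; right; rfl)
  simp only [map_mul, map_inv, mul_inv_eq_one] at this
  exact this

def φ : Fin 3 → QuiverBraidGroup := ![g 0, g 1, g 1 * g 2 * (g 1)⁻¹]

lemma comm03 : g 0 * (g 1 * g 2 * (g 1)⁻¹) = (g 1 * g 2 * (g 1)⁻¹) * g 0 := by
  have h1 : g 0 * g 1 * g 2 = g 1 * g 2 * g 0 * g 1 * (g 0)⁻¹ := by
    rw [← rel012]; group
  have h2 : g 1 * g 0 * g 1 * (g 0)⁻¹ = g 0 * g 1 := by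
    rw [← rel01]; group
  calc g 0 * (g 1 * g 2 * (g 1)⁻¹)
      = g 0 * g 1 * g 2 * (g 1)⁻¹ := by group
    _ = g 1 * g 2 * g 0 * g 1 * (g 0)⁻¹ * (g 1)⁻¹ := by rw [h1]
    _ = g 1 * g 2 * (g 1)⁻¹ * (g 1 * g 0 * g 1 * (g 0)⁻¹) * g 0 * (g 0)⁻¹ * (g 1)⁻¹ := by group
    _ = g 1 * g 2 * (g 1)⁻¹ * (g 0 * g 1) * g 0 * (g 0)⁻¹ * (g 1)⁻¹ := by rw [h2]
    _ = (g 1 * g 2 * (g 1)⁻¹) * g 0 * (g 1 * g 0 * (g 0)⁻¹ * (g 1)⁻¹) := by group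
    _ = (g 1 * g 2 * (g 1)⁻¹) * g 0 := by group

lemma hrels : ∀ r ∈ braidRels4, FreeGroup.lift φ r = 1 := by
  intro r hr
  rcases hr with rfl | rfl | rfl
  · simp only [map_mul, map_inv, FreeGroup.lift_apply_of, mul_inv_eq_one, φ]
    simpa using rel01
  · simp only [map_mul, map_inv, FreeGroup.lift_apply_of, mul_inv_eq_one, φ]
    show g 1 * (g 1 * g 2 * (g 1)⁻¹) * g 1 = (g 1 * g 2 * (g 1)⁻¹) * g 1 * (g 1 * g 2 * (g 1)⁻¹)
    have : g 1 * g 2 * g 1 * g 2 * (g 1)⁻¹ = g 1 * (g 2 * g 1 * g 2) * (g 1)⁻¹ := by group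
    rw [← rel12] at this
    calc g 1 * (g 1 * g 2 * (g 1)⁻¹) * g 1 = g 1 * g 1 * g 2 := by group
      _ = g 1 * (g 1 * g 2 * g 1) * (g 1)⁻¹ := by group
      _ = g 1 * g 2 * g 1 * g 2 * (g 1)⁻¹ := by rw [this]
      _ = (g 1 * g 2 * (g 1)⁻¹) * g 1 * (g 1 * g 2 * (g 1)⁻¹) := by group
  · simp only [map_mul, map_inv, FreeGroup.lift_apply_of, mul_inv_eq_one, φ]
    show g 0 * (g 1 * g 2 * (g 1)⁻¹) = g 1 * g 2 * (g 1)⁻¹ * g 0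
    exact comm03

/-- The assignment `s1 ↦ g1`, `s2 ↦ g2`, `s3 ↦ g2·g3·g2⁻¹` extends to a group
homomorphism `Br₄ → G`, and this homomorphism is surjective. -/
theorem stmt_3 :
    ∃ f : BraidGroup4 →* QuiverBraidGroup,
      f (s 0) = g 0 ∧ f (s 1) = g 1 ∧ f (s 2) = g 1 * g 2 * (g 1)⁻¹ ∧
      Function.Surjective f := by
  refine ⟨PresentedGroup.toGroup hrels, PresentedGroup.toGroup.of hrels,
    PresentedGroup.toGroup.of hrels, PresentedGroup.toGroup.of hrels, ?_⟩
  have h0 : g 0 ∈ (PresentedGroup.toGroup hrels).range :=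
    ⟨s 0, PresentedGroup.toGroup.of hrels⟩
  have h1 : g 1 ∈ (PresentedGroup.toGroup hrels).range :=
    ⟨s 1, PresentedGroup.toGroup.of hrels⟩
  have h3 : g 1 * g 2 * (g 1)⁻¹ ∈ (PresentedGroup.toGroup hrels).range :=
    ⟨s 2, PresentedGroup.toGroup.of hrels⟩
  have h2 : g 2 ∈ (PresentedGroup.toGroup hrels).range := by
    have := Subgroup.mul_mem _ (Subgroup.mul_mem _ (Subgroup.inv_mem _ h1) h3) h1
    simpa [mul_assoc] using this
  intro x
  have : x ∈ (PresentedGroup.toGroup hrels).range := by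
    apply PresentedGroup.generated_by
    intro j
    fin_cases j
    · exact h0
    · exact h1
    · exact h2
  exact this
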